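/- arXiv:1409.1491 — 3 statements merged into one kernel-verified Lean document; each statement's English description precedes it below -/
import Mathlib

section
/- Let τ ∈ S_n be a product of ℓ ≥ 2 disjoint cycles (i.e., τ is not an n-cycle). Then for every x ∈ ℝ^n, the vectors x, τ(x), τ²(x), ..., τ^(ν-1)(x) (ν the order of τ) do not span ℝ^n; that is, the τ-order of x is strictly less than n. -/
/-!
Summing the coordinates over each cycle of τ (fixed points included) gives a surjective linear
map `P : ℝⁿ → ℝ^ℓ` with `P (x ∘ τ) = P x`. Hence `P` sends the whole orbit of `x` to the single
vector `P x`, so its span lies in the preimage of a line, of dimension `n - ℓ + 1 < n` once `ℓ ≥ 2`.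
-/

open Module

section fiberSum

variable (R : Type*) {ι κ : Type*} [CommSemiring R] [Fintype ι] [DecidableEq κ]

def fiberSum (f : ι → κ) : (ι → R) →ₗ[R] (κ → R) where
  toFun y q := ∑ i with f i = q, y i
  map_add' y z := by ext q; simp [Finset.sum_add_distrib]
  map_smul' c y := by ext q; simp [Finset.mul_sum]

variable {R}

theorem fiberSum_apply (f : ι → κ) (y : ι → R) (q : κ) :
    fiberSum R f y q = ∑ i with f i = q, y i := rfl

theorem fiberSum_comp_perm {f : ι → κ} {σ : Equiv.Perm ι} (hσ : ∀ i, f (σ i) = f i)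
    (y : ι → R) : fiberSum R f (y ∘ σ) = fiberSum R f y := by
  ext q
  exact Finset.sum_equiv σ (by simp [hσ]) fun _ _ => rfl

theorem fiberSum_single [DecidableEq ι] (f : ι → κ) (i : ι) (c : R) :
    fiberSum R f (Pi.single i c) = Pi.single (f i) c := by
  ext q
  by_cases hq : f i = q
  · subst hq
    rw [fiberSum_apply, Finset.sum_eq_single i] <;> aesop
  · rw [fiberSum_apply, Pi.single_eq_of_ne' hq]
    exact Finset.sum_eq_zero fun j hj => Pi.single_eq_of_ne (by aesop) _

theorem fiberSum_surjective [Fintype κ] {f : ι → κ} (hf : f.Surjective) :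
    Function.Surjective (fiberSum R f) := by
  classical
  intro z
  refine ⟨∑ q, Pi.single (hf q).choose (z q), ?_⟩
  simp [map_sum, fiberSum_single, (hf _).choose_spec, Finset.univ_sum_single]

end fiberSum

theorem finrank_add_finrank_le_of_map_le_span_singleton {K V W : Type*} [Field K]
    [AddCommGroup V] [Module K V] [FiniteDimensional K V] [AddCommGroup W] [Module K W]
    {P : V →ₗ[K] W} (hP : Function.Surjective P) {U : Submodule K V} {w : W}
    (hU : U.map P ≤ K ∙ w) : finrank K U + finrank K W ≤ finrank K V + 1 := by
  have := FiniteDimensional.of_surjective P hP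
  have hV := P.finrank_range_add_finrank_ker
  have hUdim := (P.domRestrict U).finrank_range_add_finrank_ker
  rw [LinearMap.range_eq_top.2 hP, finrank_top] at hV
  rw [LinearMap.range_domRestrict] at hUdim
  have hmap : finrank K (U.map P) ≤ 1 := calc
    _ ≤ finrank K (K ∙ w) := Submodule.finrank_mono hU
    _ ≤ 1 := by simpa using finrank_span_le_card ({w} : Set W)
  have hker : finrank K (LinearMap.ker (P.domRestrict U)) ≤ finrank K (LinearMap.ker P) := by
    rw [LinearMap.ker_domRestrict, ← Submodule.finrank_map_subtype_eq]
    exact Submodule.finrank_mono (by simp)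
  omega

theorem Equiv.Perm.finrank_span_orbit_add_card_cycles_le {K ι : Type*} [Field K] [Fintype ι]
    (σ : Equiv.Perm ι) (x : ι → K) :
    finrank K (Submodule.span K (Set.range fun m : ℕ => x ∘ ⇑(σ ^ m))) +
      Nat.card (Quotient (Equiv.Perm.SameCycle.setoid σ)) ≤ Fintype.card ι + 1 := by
  classical
  let P := fiberSum K (Quotient.mk (Equiv.Perm.SameCycle.setoid σ))
  have hP : Function.Surjective P := fiberSum_surjective Quotient.mk_surjective
  have hinv (m : ℕ) : P (x ∘ ⇑(σ ^ m)) = P x :=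
    fiberSum_comp_perm (fun i => Quotient.sound (Equiv.Perm.sameCycle_pow_left.2 (.refl _ _))) x
  have hspan : (Submodule.span K (Set.range fun m : ℕ => x ∘ ⇑(σ ^ m))).map P ≤ K ∙ P x := by
    rw [Submodule.map_span_le]
    rintro _ ⟨m, rfl⟩
    exact hinv m ▸ Submodule.mem_span_singleton_self _
  simpa [Nat.card_eq_fintype_card] using finrank_add_finrank_le_of_map_le_span_singleton hP hspan

/-- If τ ∈ Sₙ is not an n-cycle (i.e. the cyclic group it generates does not act transitively
on {1, …, n}), then for every x ∈ ℝⁿ the vectors x, τ(x), …, τ^{ν-1}(x) (ν the order of τ)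
do not span ℝⁿ: the τ-order of x is strictly less than n. -/
theorem stmt4 (n : ℕ) (τ : Equiv.Perm (Fin n))
    (hτ : ¬ ∀ i j : Fin n, ∃ m : ℕ, (τ ^ m) i = j) (x : Fin n → ℝ) :
    Module.finrank ℝ (Submodule.span ℝ
      (Set.range fun m : Fin (orderOf τ) => (fun i => x ((τ ^ (m : ℕ)) i) : Fin n → ℝ))) < n := by
  push Not at hτ
  obtain ⟨i, j, hij⟩ := hτ
  have hcycles : 1 < Nat.card (Quotient (Equiv.Perm.SameCycle.setoid τ)) := by
    refine Finite.one_lt_card_iff_nontrivial.2 ⟨⟦i⟧, ⟦j⟧, fun h => ?_⟩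
    obtain ⟨m, -, hm⟩ := (Quotient.exact h).exists_pow_eq'
    exact hij m hm
  have hsub : Set.range (fun m : Fin (orderOf τ) => (fun i => x ((τ ^ (m : ℕ)) i) : Fin n → ℝ)) ⊆
      Set.range fun m : ℕ => x ∘ ⇑(τ ^ m) := by
    rintro _ ⟨m, rfl⟩
    exact ⟨m, rfl⟩
  have hbound := τ.finrank_span_orbit_add_card_cycles_le x
  rw [Fintype.card_fin] at hbound
  calc _ ≤ finrank ℝ (Submodule.span ℝ (Set.range fun m : ℕ => x ∘ ⇑(τ ^ m))) :=
        Submodule.finrank_mono (Submodule.span_mono hsub)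
    _ < n := by omega
end

section
/- Let τ ∈ S_n be a product of ℓ disjoint cycles of lengths k_1,...,k_ℓ. Then dim span_ℝ{x, τ(x), ..., τ^{ν-1}(x)} ≤ n − (ℓ − 1) for every x ∈ ℝ^n. -/
/-!
Summing the coordinates of a vector over each cycle of `τ` (fixed points counting as cycles)
is a surjective linear map `ℝⁿ → ℝ^ℓ`, so its kernel has dimension `n - ℓ`. This map does not
change when the coordinates are permuted by `τ`, hence every `τ^m x - x` lies in the kernel and
the span of the orbit of `x` lies in `ker ⊔ ℝ x`, of dimension at most `n - ℓ + 1`.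
-/

open Finset

section SumFibers

variable {K α β : Type*} [Fintype α] [DecidableEq β]

section Semiring

variable [Semiring K]

variable (K) in
def sumFibers (f : α → β) : (α → K) →ₗ[K] (β → K) :=
  ∑ a, LinearMap.single K (fun _ => K) (f a) ∘ₗ LinearMap.proj a

theorem sumFibers_apply (f : α → β) (y : α → K) :
    sumFibers K f y = ∑ a, Pi.single (f a) (y a) := by
  simp [sumFibers]

theorem sumFibers_single [DecidableEq α] (f : α → β) (a : α) (c : K) :
    sumFibers K f (Pi.single a c) = Pi.single (f a) c := by
  rw [sumFibers_apply, Fintype.sum_eq_single a fun a' ha' => by simp [ha']]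
  simp

theorem sumFibers_comp_perm {f : α → β} {e : Equiv.Perm α} (he : ∀ a, f (e a) = f a)
    (y : α → K) : sumFibers K f (y ∘ e) = sumFibers K f y := by
  simp only [sumFibers_apply, Function.comp_apply]
  exact Fintype.sum_equiv e _ _ fun a => by rw [he]

theorem sumFibers_surjective [Fintype β] {f : α → β} (hf : f.Surjective) :
    Function.Surjective (sumFibers K f) := by
  classical
  intro z
  refine ⟨∑ b, Pi.single (hf b).choose (z b), ?_⟩
  simp only [map_sum, sumFibers_single, (hf _).choose_spec]
  exact Finset.univ_sum_single z

end Semiring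

variable [Field K] [Fintype β]

theorem finrank_ker_sumFibers {f : α → β} (hf : f.Surjective) :
    Module.finrank K (LinearMap.ker (sumFibers K f)) = Fintype.card α - Fintype.card β := by
  have h := LinearMap.finrank_range_add_finrank_ker (sumFibers K f)
  rw [LinearMap.range_eq_top.mpr (sumFibers_surjective hf), finrank_top] at h
  simp only [Module.finrank_fintype_fun_eq_card] at h
  omega

theorem finrank_span_comp_pow_le_of_surjective {f : α → β} (hf : f.Surjective) {σ : Equiv.Perm α}
    (hσ : ∀ a, f (σ a) = f a) (x : α → K) :
    Module.finrank K (Submodule.span K (Set.range fun m : ℕ => x ∘ ⇑(σ ^ m)))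
      ≤ Fintype.card α - (Fintype.card β - 1) := by
  have hpow : ∀ m : ℕ, ∀ a, f ((σ ^ m) a) = f a := fun m => by
    induction m with
    | zero => simp
    | succ m ih => intro a; rw [pow_succ', Equiv.Perm.mul_apply, hσ, ih]
  have hle : Submodule.span K (Set.range fun m : ℕ => x ∘ ⇑(σ ^ m))
      ≤ LinearMap.ker (sumFibers K f) ⊔ K ∙ x := by
    rw [Submodule.span_le]
    rintro _ ⟨m, rfl⟩
    have hker : x ∘ ⇑(σ ^ m) - x ∈ LinearMap.ker (sumFibers K f) := by
      rw [LinearMap.mem_ker, map_sub, sumFibers_comp_perm (hpow m), sub_self]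
    simpa using Submodule.add_mem_sup hker (Submodule.mem_span_singleton_self x)
  have hsup :=
    Submodule.finrank_add_le_finrank_add_finrank (LinearMap.ker (sumFibers K f)) (K ∙ x)
  have hx : Module.finrank K (K ∙ x) ≤ 1 := by
    simpa using finrank_span_le_card ({x} : Set (α → K))
  have htop := Submodule.finrank_le (Submodule.span K (Set.range fun m : ℕ => x ∘ ⇑(σ ^ m)))
  rw [Module.finrank_fintype_fun_eq_card] at htop
  have := Submodule.finrank_mono hle
  rw [finrank_ker_sumFibers hf] at hsup
  have hβα := Fintype.card_le_of_surjective f hf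
  omega

end SumFibers

namespace Equiv.Perm

variable {α : Type*} [Fintype α] [DecidableEq α]

def cycleLabel (σ : Perm α) (a : α) : α ⊕ Perm α :=
  if σ a = a then .inl a else .inr (σ.cycleOf a)

theorem cycleLabel_apply_self (σ : Perm α) (a : α) : σ.cycleLabel (σ a) = σ.cycleLabel a := by
  simp only [cycleLabel, EmbeddingLike.apply_eq_iff_eq, cycleOf_self_apply]
  split_ifs with h
  · rw [h]
  · rfl

theorem image_cycleLabel (σ : Perm α) :
    univ.image σ.cycleLabel = (univ.filter fun a => σ a = a).disjSum σ.cycleFactorsFinset := by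
  ext (a | c)
  · simp only [mem_image, mem_univ, true_and, inl_mem_disjSum, mem_filter, cycleLabel]
    constructor
    · rintro ⟨b, hb⟩
      split_ifs at hb with h
      · cases hb; exact h
    · intro h
      exact ⟨a, by simp [h]⟩
  · simp only [mem_image, mem_univ, true_and, inr_mem_disjSum, cycleLabel]
    constructor
    · rintro ⟨b, hb⟩
      split_ifs at hb with h
      cases hb
      exact cycleOf_mem_cycleFactorsFinset_iff.mpr (mem_support.mpr h)
    · intro hc
      obtain ⟨a, ha⟩ := (mem_cycleFactorsFinset_iff.mp hc).1.nonempty_support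
      refine ⟨a, ?_⟩
      rw [if_neg (mem_support.mp (mem_cycleFactorsFinset_support_le hc ha)),
        ← cycle_is_cycleOf ha hc]

theorem card_image_cycleLabel (σ : Perm α) :
    #(univ.image σ.cycleLabel) = Multiset.card σ.partition.parts := by
  rw [image_cycleLabel, card_disjSum, parts_partition, Multiset.card_add, Multiset.card_replicate,
    cycleType_def, Multiset.card_map, ← Fintype.card_subtype, add_comm]
  congr 1
  rw [← sum_cycleType, ← card_fixedPoints]
  rfl

theorem partition_parts_eq_of_cycleType_eq {σ : Perm α} {s : Multiset ℕ} (hs : ∀ m ∈ s, 0 < m)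
    (hsum : s.sum = Fintype.card α) (h : σ.cycleType = s.filter (2 ≤ ·)) :
    σ.partition.parts = s := by
  have hones : s.filter (¬ 2 ≤ ·) = Multiset.replicate (Multiset.card (s.filter (¬ 2 ≤ ·))) 1 :=
    Multiset.eq_replicate_card.mpr fun m hm => by
      have hm1 := Multiset.of_mem_filter hm
      have hm0 := hs m (Multiset.mem_of_mem_filter hm)
      omega
  have hsplit := Multiset.filter_add_not (2 ≤ ·) s
  have hcount : s.sum = (s.filter (2 ≤ ·)).sum + Multiset.card (s.filter (¬ 2 ≤ ·)) := by
    conv_lhs => rw [← hsplit, Multiset.sum_add, hones]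
    simp
  rw [parts_partition, ← sum_cycleType, h, ← hsum, hcount, Nat.add_sub_cancel_left, ← hones,
    hsplit]

theorem finrank_span_comp_pow_le {K : Type*} [Field K] (σ : Perm α) (x : α → K) :
    Module.finrank K (Submodule.span K (Set.range fun m : ℕ => x ∘ ⇑(σ ^ m)))
      ≤ Fintype.card α - (Multiset.card σ.partition.parts - 1) := by
  let label : α → univ.image σ.cycleLabel := fun a =>
    ⟨σ.cycleLabel a, mem_image_of_mem _ (mem_univ a)⟩
  have hlabel : label.Surjective := by
    rintro ⟨b, hb⟩
    obtain ⟨a, -, rfl⟩ := mem_image.mp hb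
    exact ⟨a, rfl⟩
  have h := finrank_span_comp_pow_le_of_surjective hlabel
    (fun a => Subtype.ext (σ.cycleLabel_apply_self a)) x
  rwa [Fintype.card_coe, card_image_cycleLabel] at h

end Equiv.Perm

/-- If τ ∈ Sₙ is a product of ℓ disjoint cycles (fixed points as 1-cycles), then for every
x ∈ ℝⁿ, dim span{x, τ(x), …, τ^{ν-1}(x)} ≤ n − (ℓ − 1). -/
theorem stmt6 (n ℓ : ℕ) (τ : Equiv.Perm (Fin n)) (k : Fin ℓ → ℕ)
    (hk : ∀ i, 1 ≤ k i) (hsum : ∑ i, k i = n)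
    (hcyc : τ.cycleType = Multiset.filter (fun m => 2 ≤ m) (Multiset.map k Finset.univ.val))
    (x : Fin n → ℝ) :
    Module.finrank ℝ (Submodule.span ℝ
      (Set.range fun m : Fin (orderOf τ) => (fun i => x ((τ ^ (m : ℕ)) i) : Fin n → ℝ)))
    ≤ n - (ℓ - 1) := by
  have hk' : ∀ m ∈ Multiset.map k univ.val, 0 < m := fun m hm => by
    obtain ⟨i, -, rfl⟩ := Multiset.mem_map.mp hm
    exact hk i
  have hparts : τ.partition.parts = Multiset.map k univ.val :=
    τ.partition_parts_eq_of_cycleType_eq hk' (by rw [Fintype.card_fin]; exact hsum) hcyc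
  have hsub : Set.range (fun m : Fin (orderOf τ) => (fun i => x ((τ ^ (m : ℕ)) i) : Fin n → ℝ))
      ⊆ Set.range fun m : ℕ => x ∘ ⇑(τ ^ m) := by
    rintro _ ⟨m, rfl⟩
    exact ⟨m, rfl⟩
  calc _ ≤ _ := Submodule.finrank_mono (Submodule.span_mono hsub)
    _ ≤ _ := τ.finrank_span_comp_pow_le x
    _ = n - (ℓ - 1) := by simp [hparts]
end

section
/- Let τ ∈ S_n be a product of disjoint cycles c_1, ..., c_ℓ with c_i a cycle on a set of k_i indices. Write x ∈ ℝ^n as x = (x_1, ..., x_ℓ) according to the supports of the cycles. If for each i the vectors x_i, c_i(x_i), ..., c_i^{k_i - 1}(x_i) are linearly independent in ℝ^{k_i}, then dim span_ℝ{x, τ(x), ..., τ^{ν-1}(x)} = deg of the minimal polynomial of the permutation matrix of τ, which equals deg lcm(t^{k_1}−1, ..., t^{k_ℓ}−1). -/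
/-!
Let `T` be the operator `y ↦ y ∘ τ` given by the permutation matrix and `L = lcm (X ^ kᵢ - 1)`.
On the `i`-th block `τ ^ kᵢ = 1`, so `L(T) = 0`. Conversely, if `p(T) x = 0`, the remainder of `p`
modulo `X ^ kᵢ - 1` has degree `< kᵢ` and kills the restriction of `x` to block `i`, so it vanishes
by genericity. Hence `L` generates the annihilator of `x`: it is the minimal polynomial of `T`, and
the vectors `T ^ m x` span a space of dimension `deg L ≤ ν`.
-/

open Polynomial Module Finset

namespace Polynomial

variable {R : Type*} [CommRing R] {n : ℕ}

theorem monic_X_pow_sub_one (hn : n ≠ 0) : (X ^ n - 1 : R[X]).Monic := by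
  simpa using monic_X_pow_sub_C (1 : R) hn

theorem natDegree_X_pow_sub_one [Nontrivial R] : (X ^ n - 1 : R[X]).natDegree = n := by
  simpa using natDegree_X_pow_sub_C (n := n) (r := (1 : R))

theorem monic_finset_lcm {K ι : Type*} [Field K] [DecidableEq K] {s : Finset ι} {f : ι → K[X]}
    (hf : ∀ i ∈ s, f i ≠ 0) : (s.lcm f).Monic := by
  have h0 : s.lcm f ≠ 0 := by
    rw [Ne, Finset.lcm_eq_zero_iff]
    exact fun ⟨i, hi, hfi⟩ => hf i hi hfi
  simpa only [Finset.normalize_lcm] using monic_normalize h0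

end Polynomial

namespace Module.End

variable {K V : Type*} [Field K] [AddCommGroup V] [Module K V] (T : Module.End K V) (x : V)

theorem aeval_apply_eq_sum_range {p : K[X]} {N : ℕ} (hN : p.natDegree < N) :
    aeval T p x = ∑ m ∈ Finset.range N, p.coeff m • (T ^ m) x := by
  simp only [aeval_eq_sum_range' hN, LinearMap.sum_apply, LinearMap.smul_apply]

theorem aeval_modByMonic_apply (p : K[X]) {q : K[X]} (hqx : aeval T q x = 0) :
    aeval T (p %ₘ q) x = aeval T p x := by
  conv_rhs => rw [← modByMonic_add_div p q, mul_comm, map_add, map_mul]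
  simp [hqx]

theorem dvd_of_aeval_apply_eq_zero {q : K[X]} (hq : q.Monic) (hqx : aeval T q x = 0)
    (hli : LinearIndependent K fun m : Fin q.natDegree => (T ^ (m : ℕ)) x) {p : K[X]}
    (hp : aeval T p x = 0) : q ∣ p := by
  rcases eq_or_ne q 1 with rfl | hq1
  · exact one_dvd p
  rw [← modByMonic_eq_zero_iff_dvd hq]
  have hr := natDegree_modByMonic_lt p hq hq1
  have hsum : ∑ m : Fin q.natDegree, (p %ₘ q).coeff m • (T ^ (m : ℕ)) x = 0 := by
    rw [Fin.sum_univ_eq_sum_range (fun m => (p %ₘ q).coeff m • (T ^ m) x),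
      ← aeval_apply_eq_sum_range T x hr, aeval_modByMonic_apply T x p hqx, hp]
  ext m
  rw [coeff_zero]
  rcases lt_or_ge m q.natDegree with hm | hm
  · exact Fintype.linearIndependent_iff.mp hli _ hsum ⟨m, hm⟩
  · exact coeff_eq_zero_of_natDegree_lt (hr.trans_le hm)

theorem linearIndependent_pow_apply_of_forall_dvd {q : K[X]}
    (hmin : ∀ p : K[X], aeval T p x = 0 → q ∣ p) :
    LinearIndependent K fun m : Fin q.natDegree => (T ^ (m : ℕ)) x := by
  rw [Fintype.linearIndependent_iff]
  intro g hg m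
  set p : K[X] := ∑ i : Fin q.natDegree, C (g i) * X ^ (i : ℕ)
  have hp : aeval T p x = 0 := by simpa [p] using hg
  have hq0 : q ≠ 0 := by rintro rfl; exact m.elim0
  have hp0 : p = 0 := eq_zero_of_dvd_of_degree_lt (hmin p hp)
    ((degree_sum_fin_lt g).trans_eq (degree_eq_natDegree hq0).symm)
  simpa [p, coeff_X_pow, Fin.val_eq_val] using congrArg (coeff · m) hp0

theorem pow_apply_mem_span_of_aeval_apply_eq_zero {q : K[X]} (hq : q.Monic)
    (hqx : aeval T q x = 0) (m : ℕ) :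
    (T ^ m) x ∈ Submodule.span K (Set.range fun i : Fin q.natDegree => (T ^ (i : ℕ)) x) := by
  rcases eq_or_ne q 1 with rfl | hq1
  · simp_all
  rw [← aeval_X_pow (R := K), ← aeval_modByMonic_apply T x _ hqx,
    aeval_apply_eq_sum_range T x (natDegree_modByMonic_lt _ hq hq1), ← Fin.sum_univ_eq_sum_range]
  exact Submodule.sum_mem _ fun i _ => Submodule.smul_mem _ _ (Submodule.subset_span ⟨i, rfl⟩)

theorem finrank_span_pow_apply {q : K[X]} (hq : q.Monic) (hqx : aeval T q x = 0)
    (hmin : ∀ p : K[X], aeval T p x = 0 → q ∣ p) {N : ℕ} (hN : q.natDegree ≤ N) :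
    finrank K (Submodule.span K (Set.range fun m : Fin N => (T ^ (m : ℕ)) x)) = q.natDegree := by
  have hspan : Submodule.span K (Set.range fun m : Fin N => (T ^ (m : ℕ)) x) =
      Submodule.span K (Set.range fun m : Fin q.natDegree => (T ^ (m : ℕ)) x) :=
    le_antisymm
      (Submodule.span_le.2 <| Set.range_subset_iff.2 fun m =>
        pow_apply_mem_span_of_aeval_apply_eq_zero T x hq hqx m)
      (Submodule.span_mono <| Set.range_subset_iff.2 fun m => ⟨Fin.castLE hN m, rfl⟩)
  rw [hspan, finrank_span_eq_card (linearIndependent_pow_apply_of_forall_dvd T x hmin),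
    Fintype.card_fin]

theorem minpoly_eq_of_forall_dvd {q : K[X]} (hq : q.Monic) (hqT : aeval T q = 0)
    (hmin : ∀ p : K[X], aeval T p x = 0 → q ∣ p) : minpoly K T = q :=
  (minpoly.unique K T hq hqT fun p hp hpT =>
    degree_le_of_dvd (hmin p (by rw [hpT, LinearMap.zero_apply])) hp.ne_zero).symm

end Module.End

theorem LinearMap.aeval_comp_eq_comp_aeval {K V W : Type*} [Field K] [AddCommGroup V] [Module K V]
    [AddCommGroup W] [Module K W] {f : V →ₗ[K] W} {T : Module.End K V} {S : Module.End K W}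
    (h : S ∘ₗ f = f ∘ₗ T) (p : K[X]) : aeval S p ∘ₗ f = f ∘ₗ aeval T p := by
  ext v
  simp only [LinearMap.comp_apply, aeval_eq_sum_range, LinearMap.sum_apply, LinearMap.smul_apply,
    map_sum, map_smul]
  congr! 2 with i
  exact LinearMap.congr_fun (Module.End.commute_pow_left_of_commute h i) v

namespace Equiv.Perm

variable {K : Type*} [Field K] {α : Type*} (τ : Perm α)

theorem funLeft_pow (m : ℕ) :
    LinearMap.funLeft K K ⇑τ ^ m = LinearMap.funLeft K K ⇑(τ ^ m) := by
  induction m with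
  | zero => rfl
  | succ m ih => rw [pow_succ, ih, pow_succ']; rfl

theorem aeval_funLeft_X_pow_sub_one {k : ℕ} (hk : τ ^ k = 1) :
    aeval (LinearMap.funLeft K K ⇑τ) (X ^ k - 1 : K[X]) = 0 := by
  rw [map_sub, map_pow, aeval_X, map_one, funLeft_pow, hk, sub_eq_zero]
  rfl

theorem natDegree_minpoly_funLeft_le_orderOf [Finite α] :
    (minpoly K (LinearMap.funLeft K K ⇑τ)).natDegree ≤ orderOf τ := by
  have hν := (orderOf_pos τ).ne'
  calc _ ≤ (X ^ orderOf τ - 1 : K[X]).natDegree :=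
        natDegree_le_of_dvd (minpoly.dvd K _ (τ.aeval_funLeft_X_pow_sub_one (pow_orderOf_eq_one τ)))
          (monic_X_pow_sub_one hν).ne_zero
    _ = orderOf τ := natDegree_X_pow_sub_one

theorem toLin'_permMatrix [Fintype α] [DecidableEq α] :
    Matrix.toLin' (τ.permMatrix K) = LinearMap.funLeft K K ⇑τ :=
  LinearMap.ext fun v => by rw [Matrix.toLin'_apply, Matrix.permMatrix_mulVec]; rfl

theorem isCycleOn_preimage_singleton {ι : Type*} {b : α → ι} (hb : ∀ j, b (τ j) = b j)
    (htrans : ∀ p q, b p = b q → ∃ m : ℕ, (τ ^ m) p = q) (i : ι) :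
    τ.IsCycleOn (b ⁻¹' {i}) := by
  refine ⟨τ.bijOn fun j => by simp [hb], fun p hp q hq => ?_⟩
  obtain ⟨m, hm⟩ := htrans p q (hp.trans hq.symm)
  exact ⟨m, by rwa [zpow_natCast]⟩

theorem pow_card_fiber_apply [Fintype α] {ι : Type*} [DecidableEq ι] {b : α → ι}
    (hb : ∀ j, b (τ j) = b j) (htrans : ∀ p q, b p = b q → ∃ m : ℕ, (τ ^ m) p = q) (j : α) :
    (τ ^ #{q | b q = b j}) j = j :=
  IsCycleOn.pow_card_apply
    (by rw [coe_filter_univ]; exact τ.isCycleOn_preimage_singleton hb htrans (b j)) (by simp)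

variable {P : α → Prop}

theorem aeval_funLeft_subtypePerm_apply (hP : ∀ j, P (τ j) ↔ P j) (p : K[X]) (y : α → K) :
    aeval (LinearMap.funLeft K K ⇑(τ.subtypePerm hP)) p (fun j => y j) =
      fun j : {j // P j} => aeval (LinearMap.funLeft K K ⇑τ) p y j :=
  LinearMap.congr_fun (LinearMap.aeval_comp_eq_comp_aeval
    (f := LinearMap.funLeft K K (Subtype.val : {j // P j} → α)) rfl p) y

theorem subtypePerm_pow_eq_one (hP : ∀ j, P (τ j) ↔ P j) {k : ℕ}
    (hper : ∀ j, P j → (τ ^ k) j = j) : τ.subtypePerm hP ^ k = 1 := by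
  ext j
  simp [subtypePerm_pow, hper j j.2]

theorem X_pow_sub_one_dvd_of_aeval_funLeft_apply_eq_zero (hP : ∀ j, P (τ j) ↔ P j) {k : ℕ}
    (hk : k ≠ 0) (hper : ∀ j, P j → (τ ^ k) j = j) {x : α → K}
    (hli : LinearIndependent K fun m : Fin k => fun j : {j // P j} => x ((τ ^ (m : ℕ)) j))
    {p : K[X]} (hp : aeval (LinearMap.funLeft K K ⇑τ) p x = 0) : X ^ k - 1 ∣ p := by
  refine Module.End.dvd_of_aeval_apply_eq_zero (LinearMap.funLeft K K ⇑(τ.subtypePerm hP))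
    (fun j => x j) (monic_X_pow_sub_one hk) (by
      rw [aeval_funLeft_X_pow_sub_one _ (τ.subtypePerm_pow_eq_one hP hper), LinearMap.zero_apply])
    ?_ ?_
  · rw [natDegree_X_pow_sub_one]
    simp only [funLeft_pow, subtypePerm_pow]
    exact hli
  · rw [aeval_funLeft_subtypePerm_apply, hp]
    rfl

theorem aeval_funLeft_eq_zero_of_forall_dvd {ι : Type*} {b : α → ι} (hb : ∀ j, b (τ j) = b j)
    {k : ι → ℕ} (hper : ∀ j, (τ ^ k (b j)) j = j) {p : K[X]} (hp : ∀ i, X ^ k i - 1 ∣ p) :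
    aeval (LinearMap.funLeft K K ⇑τ) p = 0 := by
  refine LinearMap.ext fun y => funext fun j => ?_
  have hP : ∀ q, b (τ q) = b j ↔ b q = b j := fun q => by rw [hb]
  have hann := aeval_funLeft_X_pow_sub_one (K := K) _
    (τ.subtypePerm_pow_eq_one (P := (b · = b j)) hP fun q hq => hq ▸ hper q)
  rw [← congrFun (τ.aeval_funLeft_subtypePerm_apply (P := (b · = b j)) hP p y) ⟨j, rfl⟩,
    aeval_eq_zero_of_dvd_aeval_eq_zero (hp (b j)) hann]
  rfl

end Equiv.Perm

/-- Let τ ∈ Sₙ be a product of disjoint cycles with blocks given by b : Fin n → Fin ℓ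
(τ preserves each block and acts transitively on it; block i has kᵢ indices). If x ∈ ℝⁿ is
generic, i.e. for each block i the restrictions of x, τ(x), …, τ^{kᵢ-1}(x) to the block are
linearly independent, then dim span{x, τ(x), …, τ^{ν-1}(x)} equals the degree of the minimal
polynomial of the permutation matrix of τ, which equals deg lcm(tᵏ¹ − 1, …, tᵏˡ − 1). -/
theorem stmt17 (n ℓ : ℕ) (τ : Equiv.Perm (Fin n)) (b : Fin n → Fin ℓ) (k : Fin ℓ → ℕ)
    (hk1 : ∀ i, 1 ≤ k i)
    (hb : ∀ j, b (τ j) = b j)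
    (htrans : ∀ (i : Fin ℓ) (p q : Fin n), b p = i → b q = i → ∃ m : ℕ, (τ ^ m) p = q)
    (hcard : ∀ i, (Finset.univ.filter fun j => b j = i).card = k i)
    (x : Fin n → ℝ)
    (hgen : ∀ i : Fin ℓ, LinearIndependent ℝ
      (fun m : Fin (k i) => (fun j : {j : Fin n // b j = i} => x ((τ ^ (m : ℕ)) j.1)))) :
    Module.finrank ℝ (Submodule.span ℝ (Set.range fun m : Fin (orderOf τ) =>
        (fun i => x ((τ ^ (m : ℕ)) i) : Fin n → ℝ)))
      = (minpoly ℝ (Equiv.Perm.permMatrix ℝ τ)).natDegree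
    ∧ (minpoly ℝ (Equiv.Perm.permMatrix ℝ τ)).natDegree
      = (Finset.univ.lcm fun i => (Polynomial.X ^ (k i) - 1 : Polynomial ℝ)).natDegree := by
  classical
  set T := LinearMap.funLeft ℝ ℝ ⇑τ
  set L : ℝ[X] := univ.lcm fun i => (X ^ (k i) - 1 : ℝ[X])
  have hk : ∀ i, k i ≠ 0 := fun i => Nat.one_le_iff_ne_zero.mp (hk1 i)
  have hper : ∀ j, (τ ^ k (b j)) j = j := fun j => by
    rw [← hcard (b j)]
    exact τ.pow_card_fiber_apply hb (fun p q h => htrans _ p q h rfl) j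
  have hL : L.Monic := monic_finset_lcm fun i _ => (monic_X_pow_sub_one (hk i)).ne_zero
  have hmin : ∀ p : ℝ[X], aeval T p x = 0 → L ∣ p := fun p hp =>
    Finset.lcm_dvd fun i _ =>
      τ.X_pow_sub_one_dvd_of_aeval_funLeft_apply_eq_zero (P := (b · = i)) (fun j => by rw [hb])
        (hk i) (fun j hj => hj ▸ hper j) (hgen i) hp
  have hann : aeval T L = 0 :=
    τ.aeval_funLeft_eq_zero_of_forall_dvd hb hper fun i => Finset.dvd_lcm (mem_univ i)
  have hTL : minpoly ℝ T = L := Module.End.minpoly_eq_of_forall_dvd T x hL hann hmin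
  have hminpoly : minpoly ℝ (τ.permMatrix ℝ) = L := by
    rw [← Matrix.minpoly_toLin', τ.toLin'_permMatrix, hTL]
  have hpow : (fun m : Fin (orderOf τ) => (T ^ (m : ℕ)) x) =
      fun (m : Fin (orderOf τ)) i => x ((τ ^ (m : ℕ)) i) :=
    funext fun m => by rw [τ.funLeft_pow]; rfl
  have hLx : aeval T L x = 0 := by rw [hann, LinearMap.zero_apply]
  have hdeg : L.natDegree ≤ orderOf τ := hTL ▸ τ.natDegree_minpoly_funLeft_le_orderOf
  refine ⟨?_, by rw [hminpoly]⟩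
  rw [hminpoly, ← hpow, Module.End.finrank_span_pow_apply T x hL hLx hmin hdeg]
end
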